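/- Let β > 1 and k ∈ ℕ. Then the prefix ε(1,β)|_k = ε₁⋯ε_k of the β-expansion of 1, whenever it is admissible, is not full. -/

import Mathlib

noncomputable def Tb (β x : ℝ) : ℝ := β * x - ⌊β * x⌋

/-- The (i+1)-th digit of the β-expansion of x (0-indexed). -/
noncomputable def dig (β x : ℝ) (i : ℕ) : ℕ := (⌊β * (Tb β)^[i] x⌋).toNat

/-- w is an admissible word for base β. -/
def Adm (β : ℝ) (w : List ℕ) : Prop :=
  ∃ x, x ∈ Set.Ico (0:ℝ) 1 ∧ ∀ i (h : i < w.length), w[i] = dig β x i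

/-- u is an admissible digit sequence for base β. -/
def AdmSeq (β : ℝ) (u : ℕ → ℕ) : Prop :=
  ∃ x, x ∈ Set.Ico (0:ℝ) 1 ∧ ∀ i, u i = dig β x i

/-- The cylinder I(w) ⊆ [0,1). -/
def cyl (β : ℝ) (w : List ℕ) : Set ℝ :=
  {x | x ∈ Set.Ico (0:ℝ) 1 ∧ ∀ i (h : i < w.length), w[i] = dig β x i}

/-- w is a full word: T_β^{|w|} maps I(w) onto [0,1). -/
def Full (β : ℝ) (w : List ℕ) : Prop :=
  (Tb β)^[w.length] '' cyl β w = Set.Ico 0 1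

/-- The β-expansion of 1 is finite with length M. -/
def FiniteLen (β : ℝ) (M : ℕ) : Prop :=
  0 < M ∧ dig β 1 (M-1) ≠ 0 ∧ ∀ j, M ≤ j → dig β 1 j = 0

open Classical in
/-- The (i+1)-th digit of the modified β-expansion ε*(1,β) (0-indexed). -/
noncomputable def modExp (β : ℝ) (i : ℕ) : ℕ :=
  if h : ∃ M, FiniteLen β M then
    (if (i+1) % (Nat.find h) = 0 then dig β 1 (Nat.find h - 1) - 1
     else dig β 1 (i % Nat.find h))
  else dig β 1 i

/-- View a finite word as the sequence w0^∞. -/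
def wordSeq (w : List ℕ) (i : ℕ) : ℕ := w.getD i 0

/-- Strict lexicographic order on sequences. -/
def seqLt (u v : ℕ → ℕ) : Prop := ∃ k, (∀ i, i < k → u i = v i) ∧ u k < v k

/-- Strict lexicographic order on finite words (identified with w0^∞). -/
def wlt (u v : List ℕ) : Prop := seqLt (wordSeq u) (wordSeq v)

/-- Concatenation of a finite word with a sequence. -/
def catSeq (w : List ℕ) (u : ℕ → ℕ) (i : ℕ) : ℕ :=
  if h : i < w.length then w[i] else u (i - w.length)

open Classical in
/-- The largest position k ≤ s with ε_k ≠ 0 (greedy step). -/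
noncomputable def greedyStep (β : ℝ) (s : ℕ) : ℕ :=
  Nat.findGreatest (fun k => 1 ≤ k ∧ dig β 1 (k-1) ≠ 0) s

/-- τ_β(s): number of terms in the greedy representation of s by nonzero positions. -/
noncomputable def tau (β : ℝ) : ℕ → ℕ
  | 0 => 0
  | s + 1 => tau β (s - (greedyStep β (s+1) - 1)) + 1
decreasing_by omega

open Classical in
/-- r_s(β): maximal length of a string of 0's in ε₁*⋯ε_s*. -/
noncomputable def rrun (β : ℝ) (s : ℕ) : ℕ :=
  Nat.findGreatest (fun k => 1 ≤ k ∧ ∃ i, i + k ≤ s ∧ ∀ t, t < k → modExp β (i + t) = 0) s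

/-- v is the immediate successor of u in the lexicographic order on Σ_β^n. -/
def SuccIn (β : ℝ) (n : ℕ) (u v : List ℕ) : Prop :=
  u.length = n ∧ v.length = n ∧ Adm β u ∧ Adm β v ∧ wlt u v ∧
  ¬ ∃ z : List ℕ, z.length = n ∧ Adm β z ∧ wlt u z ∧ wlt z v

/-- There is a run of l consecutive non-full words in Σ_β^n. -/
def NonFullRun (β : ℝ) (n l : ℕ) : Prop :=
  ∃ f : ℕ → List ℕ,
    (∀ j, j < l → (f j).length = n ∧ Adm β (f j) ∧ ¬ Full β (f j)) ∧
    (∀ j, j + 1 < l → SuccIn β n (f j) (f (j+1)))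

/-- There is a maximal run of l consecutive non-full words in Σ_β^n. -/
def MaxNonFullRun (β : ℝ) (n l : ℕ) : Prop :=
  0 < l ∧ ∃ f : ℕ → List ℕ,
    (∀ j, j < l → (f j).length = n ∧ Adm β (f j) ∧ ¬ Full β (f j)) ∧
    (∀ j, j + 1 < l → SuccIn β n (f j) (f (j+1))) ∧
    (∀ u, SuccIn β n u (f 0) → Full β u) ∧
    (∀ u, SuccIn β n (f (l-1)) u → Full β u)

/-- There is a maximal run of l consecutive full words in Σ_β^n. -/
def MaxFullRun (β : ℝ) (n l : ℕ) : Prop :=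
  0 < l ∧ ∃ f : ℕ → List ℕ,
    (∀ j, j < l → (f j).length = n ∧ Adm β (f j) ∧ Full β (f j)) ∧
    (∀ j, j + 1 < l → SuccIn β n (f j) (f (j+1))) ∧
    (∀ u, SuccIn β n u (f 0) → ¬ Full β u) ∧
    (∀ u, SuccIn β n (f (l-1)) u → ¬ Full β u)

/-- The canonical decomposition of an admissible word, as in the structure theorem:
p.1 is the list of block lengths k₁,…,k_p and p.2 is the final length l. -/
def Decomp (β : ℝ) (w : List ℕ) (p : List ℕ × ℕ) : Prop :=
  1 ≤ p.2 ∧ (∀ k ∈ p.1, 1 ≤ k) ∧ p.1.sum + p.2 = w.length ∧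
  (∀ j, j < p.1.length →
    (∀ t, t < p.1.getD j 0 - 1 → w.getD ((p.1.take j).sum + t) 0 = dig β 1 t) ∧
    w.getD ((p.1.take j).sum + (p.1.getD j 0 - 1)) 0 < dig β 1 (p.1.getD j 0 - 1)) ∧
  (∀ t, t < p.2 - 1 → w.getD (p.1.sum + t) 0 = dig β 1 t) ∧
  w.getD (p.1.sum + (p.2 - 1)) 0 ≤ dig β 1 (p.2 - 1)

/-!
If the prefix `ε₁⋯ε_k` of the expansion of `1` were full, the point `T_β^k 1 ∈ [0,1)` would be
`T_β^k x` for some `x ∈ [0,1)` with the same first `k` digits. But `x` is recovered from its first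
`k` digits and `T_β^k x` (undo `T_β x = β x - ε₁(x)` step by step), so `x = 1`, which is absurd.
-/

lemma Tb_mem_Ico (β x : ℝ) : Tb β x ∈ Set.Ico (0 : ℝ) 1 :=
  ⟨Int.fract_nonneg (β * x), Int.fract_lt_one (β * x)⟩

lemma iterate_Tb_mem_Ico (β x : ℝ) {n : ℕ} (hn : 1 ≤ n) : (Tb β)^[n] x ∈ Set.Ico (0 : ℝ) 1 := by
  obtain ⟨m, rfl⟩ := Nat.exists_eq_add_of_le' hn
  rw [Function.iterate_succ_apply']
  exact Tb_mem_Ico β _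

lemma dig_succ (β x : ℝ) (i : ℕ) : dig β x (i + 1) = dig β (Tb β x) i := by
  simp only [dig, Function.iterate_succ_apply]

lemma eq_of_dig_zero_eq_of_Tb_eq {β x y : ℝ} (hβ : 0 < β) (hx : 0 ≤ x) (hy : 0 ≤ y)
    (hd : dig β x 0 = dig β y 0) (hT : Tb β x = Tb β y) : x = y := by
  have hfloor : ⌊β * x⌋ = ⌊β * y⌋ := by
    simp only [dig, Function.iterate_zero, id] at hd
    have hx' := Int.toNat_of_nonneg (Int.floor_nonneg.2 (by positivity : 0 ≤ β * x))
    have hy' := Int.toNat_of_nonneg (Int.floor_nonneg.2 (by positivity : 0 ≤ β * y))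
    omega
  have hmul : β * x = β * y := by
    simp only [Tb, hfloor] at hT
    linarith
  exact mul_left_cancel₀ hβ.ne' hmul

lemma eq_of_dig_eq_of_iterate_Tb_eq {β : ℝ} (hβ : 0 < β) (n : ℕ) :
    ∀ {x y : ℝ}, 0 ≤ x → 0 ≤ y → (∀ i < n, dig β x i = dig β y i) →
      (Tb β)^[n] x = (Tb β)^[n] y → x = y := by
  induction n with
  | zero => intro x y _ _ _ h; exact h
  | succ n ih =>
    intro x y hx hy hd hT
    have hTxy : Tb β x = Tb β y := by
      refine ih (Tb_mem_Ico β x).1 (Tb_mem_Ico β y).1 (fun i hi => ?_) hT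
      rw [← dig_succ, ← dig_succ]
      exact hd (i + 1) (by omega)
    exact eq_of_dig_zero_eq_of_Tb_eq hβ hx hy (hd 0 n.succ_pos) hTxy

theorem stmt6_general (β : ℝ) (hβ : 1 < β) (k : ℕ) (hk : 1 ≤ k) :
    ¬ Full β (List.ofFn (fun i : Fin k => dig β 1 i)) := by
  intro hfull
  rw [Full, List.length_ofFn] at hfull
  have hmem : (Tb β)^[k] 1 ∈ (Tb β)^[k] '' cyl β (List.ofFn (fun i : Fin k => dig β 1 i)) :=
    hfull ▸ iterate_Tb_mem_Ico β 1 hk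
  obtain ⟨x, ⟨hx, hxdig⟩, hTx⟩ := hmem
  have hdig : ∀ i < k, dig β x i = dig β 1 i := fun i hi => by
    have := hxdig i (by simpa using hi)
    simp only [List.getElem_ofFn] at this
    exact this.symm
  have hx1 : x = 1 :=
    eq_of_dig_eq_of_iterate_Tb_eq (by linarith) k hx.1 zero_le_one hdig hTx
  exact hx.2.ne hx1

/-- admissible prefixes of ε(1,β) are never full. -/
theorem stmt6 (β : ℝ) (hβ : 1 < β) (k : ℕ) (hk : 1 ≤ k)
    (h : Adm β (List.ofFn (fun i : Fin k => dig β 1 i))) :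
    ¬ Full β (List.ofFn (fun i : Fin k => dig β 1 i)) :=
  stmt6_general β hβ k hk
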